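/- arXiv:2507.07869 — 5 statements merged into one kernel-verified Lean document; each statement's English description precedes it below -/
import Mathlib

section
/- Let A and B be metric spaces with A nonempty, and let f : A → B be a nonexpansive map (i.e. 1-Lipschitz, the ℝ⁺-functor condition). Then the following are equivalent: (1) for all b, b' ∈ B, the infimum over a ∈ A of dist(b, f a) + dist(f a, b') equals dist(b, b') (i.e. f is Cauchy dense); (2) f has dense range, i.e. the image of f is topologically dense in B. -/
/-- A nonexpansive map `f : A → B` between metric spaces (with `A` nonempty) is
Cauchy dense (as an `ℝ⁺`-functor) iff its image is topologically dense in `B`. -/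
theorem cauchyDense_iff_denseRange {A B : Type*} [MetricSpace A] [MetricSpace B]
    [Nonempty A] (f : A → B) (hf : LipschitzWith 1 f) :
    (∀ b b' : B, (⨅ a : A, dist b (f a) + dist (f a) b') = dist b b') ↔ DenseRange f := by
  constructor
  · intro h
    rw [Metric.denseRange_iff]
    intro b ε hε
    have h0 : (⨅ a : A, dist b (f a) + dist (f a) b) = 0 := by
      simpa using h b b
    have hlt : (⨅ a : A, dist b (f a) + dist (f a) b) < ε := by
      rw [h0]; exact hε
    obtain ⟨a, ha⟩ := exists_lt_of_ciInf_lt hlt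
    exact ⟨a, lt_of_le_of_lt (le_add_of_nonneg_right dist_nonneg) ha⟩
  · intro h b b'
    have hbdd : BddBelow (Set.range fun a : A => dist b (f a) + dist (f a) b') :=
      ⟨0, by rintro x ⟨a, rfl⟩; positivity⟩
    apply le_antisymm
    · apply le_of_forall_pos_le_add
      intro ε hε
      obtain ⟨a, ha⟩ := (Metric.denseRange_iff.mp h) b (ε / 2) (by linarith)
      calc (⨅ a : A, dist b (f a) + dist (f a) b') ≤ dist b (f a) + dist (f a) b' :=
            ciInf_le hbdd a
        _ ≤ dist b (f a) + (dist (f a) b + dist b b') := by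
            gcongr; exact dist_triangle _ _ _
        _ ≤ ε / 2 + (ε / 2 + dist b b') := by
            rw [dist_comm (f a) b]; gcongr <;> exact ha.le
        _ = dist b b' + ε := by ring
    · exact le_ciInf fun a => dist_triangle b (f a) b'
end

section
/- Let A and B be preorders and f : A → B a monotone map, and let F be the induced functor between the associated (ordinary) categories. Then F is a lax epimorphism if and only if for all b, b' ∈ B with b ≤ b', the full subcategory of A on the set {a ∈ A | b ≤ f a and f a ≤ b'} is a connected category (in particular nonempty, with any two of its objects joined by a zigzag of inequalities within the set). -/
/-!
For `γ : F ⋙ G ⟶ F ⋙ H` and `b ≤ b'`, each `a` with `b ≤ f a ≤ b'` gives a composite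
`G b ⟶ G (f a) ⟶ H (f a) ⟶ H b'`, and naturality of `γ` makes it invariant along morphisms
of this fibre. If the fibres are connected, the composites do not depend on `a`, and those
over `b ≤ b` assemble into the unique extension of `γ` to `G ⟶ H`.

Conversely, if `γ` is the whiskering of some `α : G ⟶ H`, the composite is
`α_b ≫ H (b ≤ b')` whatever `a` is. Take `G = (b ≤ -)` and `H c = Prop ^ Hom(c, b')` as
set-valued functors: a predicate on the fibre that is invariant along its morphisms is then a
transformation `γ`, and fullness forces the predicate to be constant, i.e. the fibre is
connected. For nonemptiness, with `H c = [c ≰ b']` a transformation `γ` exists exactly when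
the fibre is empty, and it cannot extend to `G ⟶ H` since `G b'` is inhabited and `H b'` is
empty.
-/

open CategoryTheory

universe v₄ u₄ u v w

-- A small substitute for `Type`, with objects and morphisms in arbitrary universes.
def SubsetCat (α : Type) : Type w := ULift.{w} (Set α)

namespace SubsetCat

variable {α : Type}

instance : Category.{v} (SubsetCat.{w} α) where
  Hom X Y := ULift.{v} (X.down → Y.down)
  id _ := ⟨id⟩
  comp f g := ⟨g.down ∘ f.down⟩

@[ext]
lemma hom_ext {X Y : SubsetCat.{w} α} {g g' : X ⟶ Y} (h : ∀ x, g.down x = g'.down x) :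
    g = g' :=
  ULift.ext _ _ (funext h)

variable {B : Type u} [Preorder B]

def ofMonotone (P : B → Prop) (hP : Monotone P) : B ⥤ SubsetCat.{w} α where
  obj c := ⟨{_x | P c}⟩
  map m := ⟨fun x => ⟨x.1, hP m.le x.2⟩⟩

-- `c ↦ Prop ^ Hom(c, b')`: all of `Prop` when `c ≤ b'`, otherwise only the true propositions.
def propPowHomTo (b' : B) : B ⥤ SubsetCat.{w} Prop where
  obj c := ⟨{q | ¬ c ≤ b' → q}⟩
  map {_ c₂} _ := ⟨fun q => ⟨c₂ ≤ b' → q.1, fun h h' => absurd h' h⟩⟩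
  map_id c := by
    ext q
    show (c ≤ b' → q.1) ↔ q.1
    exact ⟨fun h => (em (c ≤ b')).elim h q.2, fun h _ => h⟩
  map_comp {_ c₂ c₃} _ m' := by
    ext q
    show (c₃ ≤ b' → q.1) ↔ (c₃ ≤ b' → c₂ ≤ b' → q.1)
    exact ⟨fun h h₃ _ => h h₃, fun h h₃ => h h₃ (m'.le.trans h₃)⟩

end SubsetCat

section IntervalFiber

variable {A B : Type u} [Preorder A] [Preorder B]

abbrev IntervalFiber (f : A → B) (b b' : B) : Type u :=
  ObjectProperty.FullSubcategory fun a : A => b ≤ f a ∧ f a ≤ b'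

variable {f : A → B} {C : Type*} [Category C] {G H : B ⥤ C}

def fiberHom (t : ∀ a, G.obj (f a) ⟶ H.obj (f a)) {b b' : B} (x : IntervalFiber f b b') :
    G.obj b ⟶ H.obj b' :=
  G.map (homOfLE x.property.1) ≫ t x.obj ≫ H.map (homOfLE x.property.2)

lemma fiberHom_app (α : G ⟶ H) {b b' : B} (hb : b ≤ b') (x : IntervalFiber f b b') :
    fiberHom (fun a => α.app (f a)) x = α.app b ≫ H.map (homOfLE hb) := by
  simp [fiberHom, ← Functor.map_comp]

lemma fiberHom_self (t : ∀ a, G.obj (f a) ⟶ H.obj (f a)) (a : A) :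
    fiberHom t (⟨a, le_rfl, le_rfl⟩ : IntervalFiber f (f a) (f a)) = t a := by
  simp [fiberHom]

lemma fiberHom_eq_of_isPreconnected (hf : Monotone f) (t : ∀ a, G.obj (f a) ⟶ H.obj (f a))
    (ht : ∀ a a' (h : a ≤ a'), G.map (homOfLE (hf h)) ≫ t a' = t a ≫ H.map (homOfLE (hf h)))
    {b b' : B} [IsPreconnected (IntervalFiber f b b')] (x y : IntervalFiber f b b') :
    fiberHom t x = fiberHom t y := by
  refine constant_of_preserves_morphisms _ (fun x y m => ?_) x y
  have hxy := hf m.hom.le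
  calc fiberHom t x
      = G.map (homOfLE x.property.1) ≫ (t x.obj ≫ H.map (homOfLE hxy)) ≫
          H.map (homOfLE y.property.2) := by simp [fiberHom, ← H.map_comp]
    _ = G.map (homOfLE x.property.1) ≫ (G.map (homOfLE hxy) ≫ t y.obj) ≫
          H.map (homOfLE y.property.2) := by rw [ht x.obj y.obj m.hom.le]
    _ = fiberHom t y := by simp [fiberHom, ← G.map_comp_assoc]

lemma map_comp_fiberHom (t : ∀ a, G.obj (f a) ⟶ H.obj (f a)) {c b b' : B} (m : c ⟶ b)
    (x : IntervalFiber f b b') :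
    G.map m ≫ fiberHom t x =
      fiberHom t (⟨x.obj, m.le.trans x.property.1, x.property.2⟩ : IntervalFiber f c b') := by
  rw [fiberHom, fiberHom, ← G.map_comp_assoc]
  rfl

lemma fiberHom_comp_map (t : ∀ a, G.obj (f a) ⟶ H.obj (f a)) {b b' c : B} (m : b' ⟶ c)
    (x : IntervalFiber f b b') :
    fiberHom t x ≫ H.map m =
      fiberHom t (⟨x.obj, x.property.1, x.property.2.trans m.le⟩ : IntervalFiber f b c) := by
  simp only [fiberHom, Category.assoc, ← H.map_comp]
  rfl

variable (hf : Monotone f)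

lemma faithful_whiskeringLeft_of_nonempty (hne : ∀ b, Nonempty (IntervalFiber f b b)) :
    ((Functor.whiskeringLeft A B C).obj hf.functor).Faithful where
  map_injective {G H α β} hαβ := by
    ext b
    obtain ⟨x⟩ := hne b
    have hfα : (fun a => α.app (f a)) = fun a => β.app (f a) :=
      funext (NatTrans.congr_app hαβ)
    simpa [fiberHom_app _ le_rfl] using congrArg (fiberHom · x) hfα

lemma full_whiskeringLeft_of_isConnected
    (hconn : ∀ b b', b ≤ b' → IsConnected (IntervalFiber f b b')) :
    ((Functor.whiskeringLeft A B C).obj hf.functor).Full where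
  map_surjective {G H} γ := by
    let t : ∀ a, G.obj (f a) ⟶ H.obj (f a) := γ.app
    have hconst {b b' : B} (x y : IntervalFiber f b b') :
        fiberHom t x = fiberHom t y := by
      have := hconn b b' (x.property.1.trans x.property.2)
      exact fiberHom_eq_of_isPreconnected hf t (fun _ _ h => γ.naturality (homOfLE h)) x y
    let pt (b : B) : IntervalFiber f b b := Classical.choice (hconn b b le_rfl).is_nonempty
    refine ⟨{ app b := fiberHom t (pt b), naturality b₁ b₂ m := ?_ }, ?_⟩
    · rw [map_comp_fiberHom, fiberHom_comp_map]
      exact hconst _ _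
    · ext a
      exact (hconst (pt (f a)) ⟨a, le_rfl, le_rfl⟩).trans (fiberHom_self t a)

end IntervalFiber

section Detection

open SubsetCat

variable {A B : Type u} [Preorder A] [Preorder B] {f : A → B} (hf : Monotone f)

lemma nonempty_intervalFiber_of_full
    (hfull : ((Functor.whiskeringLeft A B (SubsetCat.{w} Prop)).obj hf.functor).Full)
    {b b' : B} (hb : b ≤ b') : Nonempty (IntervalFiber f b b') := by
  by_contra hempty
  let G : B ⥤ SubsetCat.{w} Prop := ofMonotone (b ≤ ·) fun _ _ h h' => h'.trans h
  let H : B ⥤ SubsetCat.{w} Prop :=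
    ofMonotone (¬ · ≤ b') fun _ _ h h₁ h₂ => h₁ (h.trans h₂)
  let γ : hf.functor ⋙ G ⟶ hf.functor ⋙ H :=
    { app a := ⟨fun x => ⟨x.1, fun h => hempty ⟨⟨a, x.2, h⟩⟩⟩⟩ }
  obtain ⟨β, -⟩ := hfull.map_surjective γ
  exact ((β.app b').down ⟨True, hb⟩).2 le_rfl

lemma isConnected_intervalFiber_of_full
    (hfull : ((Functor.whiskeringLeft A B (SubsetCat.{w} Prop)).obj hf.functor).Full)
    {b b' : B} (hb : b ≤ b') : IsConnected (IntervalFiber f b b') := by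
  obtain ⟨x₀⟩ := nonempty_intervalFiber_of_full hf hfull hb
  refine IsConnected.of_induct (j₀ := x₀) fun p hx₀ hp y => ?_
  let G : B ⥤ SubsetCat.{w} Prop := ofMonotone (b ≤ ·) fun _ _ h h' => h'.trans h
  let H : B ⥤ SubsetCat.{w} Prop := propPowHomTo b'
  let γ : hf.functor ⋙ G ⟶ hf.functor ⋙ H :=
    { app a := ⟨fun x => ⟨∀ h : f a ≤ b', (⟨a, x.2, h⟩ : IntervalFiber f b b') ∈ p,
        fun h h' => absurd h' h⟩⟩
      naturality a a' m := by
        ext x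
        exact ⟨fun h h' _ => (hp (ObjectProperty.homMk m)).2 (h h'),
          fun h h' => (hp (ObjectProperty.homMk m)).1 (h h' ((hf m.le).trans h'))⟩ }
  obtain ⟨β, hβ⟩ := hfull.map_surjective γ
  let t : ∀ a, G.obj (f a) ⟶ H.obj (f a) := γ.app
  have hβt : (fun a => β.app (f a)) = t := funext (NatTrans.congr_app hβ)
  have key : fiberHom t x₀ = fiberHom t y := by
    rw [← hβt, fiberHom_app β hb, fiberHom_app β hb]
  -- at the point `True` of `G.obj b`, the two sides read `x₀ ∈ p` and `y ∈ p`
  have hval := congrArg (fun g => (g.down ⟨True, le_rfl⟩).1) key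
  exact hval.mp (fun _ _ => hx₀) le_rfl y.property.2

end Detection

/-- An ordinary functor between preorders (viewed as categories) is a lax
epimorphism iff for all `b ≤ b'` in the codomain, the full subcategory
`{a | b ≤ f a ∧ f a ≤ b'}` of the domain is a connected category. -/
theorem preorder_functor_laxEpi_iff_connected
    {A B : Type u} [Preorder A] [Preorder B] (f : A → B) (hf : Monotone f) :
    (∀ (C : Type u₄) (_ : Category.{v₄} C),
      ((Functor.whiskeringLeft A B C).obj hf.functor).Full ∧
        ((Functor.whiskeringLeft A B C).obj hf.functor).Faithful) ↔
    (∀ b b' : B, b ≤ b' →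
      CategoryTheory.IsConnected (ObjectProperty.FullSubcategory fun a : A => b ≤ f a ∧ f a ≤ b')) := by
  refine ⟨fun hlax b b' hb => isConnected_intervalFiber_of_full hf (hlax _ _).1 hb,
    fun hconn C _ => ⟨full_whiskeringLeft_of_isConnected hf hconn,
      faithful_whiskeringLeft_of_nonempty hf fun b => ?_⟩⟩
  exact (hconn b b le_rfl).is_nonempty
end

section
/- Let f : A →* B be a monoid homomorphism. Let r_f be the relation on B × B generated by r_f (b * f a, b') (b, f a * b') for all a ∈ A and b, b' ∈ B, and let ≈_f denote the equivalence relation Relation.EqvGen r_f it generates. Then the map (B × B)/≈_f → B induced by multiplication (x, y) ↦ x * y (which is well defined and always surjective) is bijective if and only if for every b ∈ B one has (b, 1) ≈_f (1, b). -/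
/-- The relation `r_f` on `B × B` generated by a monoid homomorphism `f : A →* B`:
`(b * f a, b') ∼ (b, f a * b')` for all `a ∈ A` and `b, b' ∈ B`. -/
def cauchyRel {A B : Type*} [Monoid A] [Monoid B] (f : A →* B) :
    B × B → B × B → Prop :=
  fun p q => ∃ (a : A) (b b' : B), p = (b * f a, b') ∧ q = (b, f a * b')

/-- The map `(B × B)/≈_f → B` induced by multiplication. -/
def cauchyMul {A B : Type*} [Monoid A] [Monoid B] (f : A →* B) :
    Quot (cauchyRel f) → B :=
  Quot.lift (fun p => p.1 * p.2) (by
    rintro _ _ ⟨a, b, b', rfl, rfl⟩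
    simp [mul_assoc])

private lemma cauchy_mul_left {A B : Type*} [Monoid A] [Monoid B] (f : A →* B)
    (c : B) {p q : B × B} (h : Relation.EqvGen (cauchyRel f) p q) :
    Relation.EqvGen (cauchyRel f) (c * p.1, p.2) (c * q.1, q.2) := by
  induction h with
  | rel x y hxy =>
    obtain ⟨a, b, b', rfl, rfl⟩ := hxy
    exact Relation.EqvGen.rel _ _ ⟨a, c * b, b', by simp [mul_assoc], rfl⟩
  | refl x => exact Relation.EqvGen.refl _
  | symm x y _ ih => exact ih.symm
  | trans x y z _ _ ih1 ih2 => exact ih1.trans _ _ _ ih2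

/-- A monoid homomorphism `f : A →* B` is Cauchy dense (multiplication induces a
bijection `(B × B)/≈_f → B`) iff `(b, 1) ≈_f (1, b)` for every `b ∈ B`. -/
theorem monoidHom_cauchyDense_iff {A B : Type*} [Monoid A] [Monoid B] (f : A →* B) :
    Function.Bijective (cauchyMul f) ↔
      ∀ b : B, Relation.EqvGen (cauchyRel f) (b, 1) (1, b) := by
  constructor
  · intro h b
    have : cauchyMul f (Quot.mk _ (b, 1)) = cauchyMul f (Quot.mk _ (1, b)) := by
      simp [cauchyMul]
    exact (Quot.eq.mp (h.injective this))
  · intro h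
    constructor
    · intro x y
      induction x using Quot.ind with | _ p =>
      induction y using Quot.ind with | _ q =>
      intro hpq
      simp only [cauchyMul] at hpq
      apply Quot.eqvGen_sound
      have h1 : Relation.EqvGen (cauchyRel f) (p.1 * p.2, 1) (p.1, p.2) := by
        have := cauchy_mul_left f p.1 (h p.2)
        simpa using this
      have h2 : Relation.EqvGen (cauchyRel f) (q.1 * q.2, 1) (q.1, q.2) := by
        have := cauchy_mul_left f q.1 (h q.2)
        simpa using this
      rw [hpq] at h1
      exact (h1.symm _ _).trans _ _ _ h2
    · intro b
      exact ⟨Quot.mk _ (b, 1), by simp [cauchyMul]⟩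
end

section
/- Let f : A →* B be a monoid homomorphism, and let ≈_f be the equivalence relation Relation.EqvGen of the relation on B × B generated by (b * f a, b') ∼ (b, f a * b') for a ∈ A, b, b' ∈ B. If (b, 1) ≈_f (1, b) for every b ∈ B (i.e. f is Cauchy dense), then f is an epimorphism of monoids: for every monoid C and every pair of monoid homomorphisms g, h : B →* C with g ∘ f = h ∘ f, one has g = h. -/
/-- If a monoid homomorphism `f : A →* B` is Cauchy dense (i.e. `(b, 1) ≈_f (1, b)`
for all `b`), then `f` is an epimorphism of monoids. -/
theorem monoidHom_epi_of_cauchyDense {A B : Type*} [Monoid A] [Monoid B] (f : A →* B)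
    (hf : ∀ b : B, Relation.EqvGen (cauchyRel f) (b, 1) (1, b)) :
    ∀ (C : Type*) [Monoid C] (g h : B →* C), g.comp f = h.comp f → g = h := by
  intro C _ g h hgh
  have hfa : ∀ a : A, g (f a) = h (f a) := fun a => congrArg (· a) hgh
  have key : ∀ p q : B × B, Relation.EqvGen (cauchyRel f) p q →
      g p.1 * h p.2 = g q.1 * h q.2 := by
    intro p q hpq
    induction hpq with
    | rel p q hr =>
        obtain ⟨a, b, b', hp, hq⟩ := hr
        subst hp; subst hq
        simp only [map_mul, hfa, mul_assoc]
    | refl => rfl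
    | symm _ _ _ ih => exact ih.symm
    | trans _ _ _ _ _ ih1 ih2 => exact ih1.trans ih2
  ext b
  have := key _ _ (hf b)
  simpa using this
end

section
/- Let F : A ⥤ B be a lax epimorphism between small categories. Then the induced function on connected components, sending the zigzag-class of an object a of A to the zigzag-class of F.obj a in B, is a bijection from the set of connected components of A to the set of connected components of B. -/
open CategoryTheory

universe v₄ u₄ u

/-- `F : A ⥤ B` is a lax epimorphism if precomposition with `F` is fully faithful
on all functor categories. -/
def LaxEpi {A B : Type u} [SmallCategory A] [SmallCategory B] (F : A ⥤ B) : Prop :=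
  ∀ (C : Type u₄) (_ : Category.{v₄} C),
    ((Functor.whiskeringLeft A B C).obj F).Full ∧ ((Functor.whiskeringLeft A B C).obj F).Faithful

/-! Natural transformations `const X ⟶ const Y` are exactly the functions
`π₀ J → (X ⟶ Y)`, and whiskering with `F` corresponds to precomposition with `π₀ F`.
Full faithfulness of whiskering therefore makes precomposition with `π₀ F` bijective on
functions into any hom-set, and a hom-set with two elements forces `π₀ F` to be bijective. -/

namespace CategoryTheory

section ConstNatTrans

variable {J : Type*} [Category J] {C : Type*} [Category C] {X Y : C}

lemma NatTrans.const_app_eq_of_hom (θ : (Functor.const J).obj X ⟶ (Functor.const J).obj Y)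
    {j j' : J} (f : j ⟶ j') : θ.app j = θ.app j' := by
  simpa using (θ.naturality f).symm

def constNatTransEquiv :
    ((Functor.const J).obj X ⟶ (Functor.const J).obj Y) ≃
      (ConnectedComponents J → (X ⟶ Y)) where
  toFun θ := ConnectedComponents.liftFunctor J
    { obj j := Discrete.mk (θ.app j)
      map f := Discrete.eqToHom (θ.const_app_eq_of_hom f) }
  invFun g :=
    { app j := g (ConnectedComponents.mk j)
      naturality j j' f := by
        simp [show ConnectedComponents.mk j = ConnectedComponents.mk j' from
          _root_.Quotient.sound (Zigzag.of_hom f)] }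
  left_inv θ := by ext; rfl
  right_inv g := by funext x; induction x using _root_.Quotient.inductionOn; rfl

variable {A B : Type*} [Category A] [Category B] (F : A ⥤ B)

lemma constNatTransEquiv_whiskerLeft (θ : (Functor.const B).obj X ⟶ (Functor.const B).obj Y) :
    constNatTransEquiv (J := A) (Functor.whiskerLeft F θ) =
      constNatTransEquiv θ ∘ F.mapConnectedComponents := by
  funext x; induction x using _root_.Quotient.inductionOn; rfl

end ConstNatTrans

namespace Functor

variable {A B : Type*} [Category A] [Category B] (F : A ⥤ B) {C : Type*} [Category C]

lemma surjective_comp_mapConnectedComponents [((whiskeringLeft A B C).obj F).Full] (X Y : C) :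
    Function.Surjective fun g : ConnectedComponents B → (X ⟶ Y) ↦
      g ∘ F.mapConnectedComponents := by
  intro h
  obtain ⟨θ, hθ⟩ := ((whiskeringLeft A B C).obj F).map_surjective
    (X := (const B).obj X) (Y := (const B).obj Y) (constNatTransEquiv.symm h)
  refine ⟨constNatTransEquiv θ, ?_⟩
  change constNatTransEquiv θ ∘ F.mapConnectedComponents = h
  rw [← constNatTransEquiv_whiskerLeft]
  exact (constNatTransEquiv.eq_symm_apply).mp hθ

lemma injective_comp_mapConnectedComponents [((whiskeringLeft A B C).obj F).Faithful] (X Y : C) :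
    Function.Injective fun g : ConnectedComponents B → (X ⟶ Y) ↦
      g ∘ F.mapConnectedComponents := by
  intro g g' h
  apply constNatTransEquiv.symm.injective
  apply ((whiskeringLeft A B C).obj F).map_injective
  apply constNatTransEquiv.injective
  simpa [constNatTransEquiv_whiskerLeft] using h

end Functor

lemma exists_nontrivial_hom.{v, w} :
    ∃ (C : Type w) (_ : Category.{v} C) (X Y : C), Nontrivial (X ⟶ Y) :=
  ⟨ULiftHom.{v} (ULift.{w} Limits.WalkingParallelPair), inferInstance,
    ULiftHom.objUp ⟨.zero⟩, ULiftHom.objUp ⟨.one⟩,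
    ⟨⟨ULift.up .left, ULift.up .right, nofun⟩⟩⟩

end CategoryTheory

/-- A lax epimorphism (i.e. Cauchy dense functor) between small categories induces
a bijection on connected components. -/
theorem laxEpi_bijective_mapConnectedComponents
    {A B : Type u} [SmallCategory A] [SmallCategory B]
    (F : A ⥤ B) (hF : LaxEpi.{v₄, u₄} F) :
    Function.Bijective F.mapConnectedComponents := by
  obtain ⟨C, _, X, Y, _⟩ := exists_nontrivial_hom.{v₄, u₄}
  obtain ⟨_, _⟩ := hF C ‹_›
  exact ⟨Function.surjective_comp_right_iff_injective.mp
      (F.surjective_comp_mapConnectedComponents X Y),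
    Function.injective_comp_right_iff_surjective.mp
      (F.injective_comp_mapConnectedComponents X Y)⟩
end
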